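/- arXiv:2110.01581 — 2 statements merged into one kernel-verified Lean document; each statement's English description precedes it below -/
import Mathlib

section
/- In the change-point model, suppose that the log-likelihood ratios have finite variances and that sup_{t ≥ ν ≥ 1} (1/g_ν(n)²) · Σ_{i=t}^{t+n−1} Var_ν(Z_{i,t}) → 0 as n → ∞. Then the right-tail condition holds: for every δ > 0, sup_{ν ≥ 1} P_ν( max_{t ≤ n} Σ_{i=ν}^{ν+t−1} Z_{i,ν} ≥ (1+δ) g_ν(n) ) → 0 as n → ∞. -/
/-!
Centred at their means, the log-likelihood ratios `Z_{ν+i,ν}` are independent, square-integrable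
and mean zero under `P_ν`, and their partial sums are `S_ν(t) - g_ν(t)`. Since `g_ν` is
increasing, `S_ν(t) ≥ (1 + δ) g_ν(n)` for some `t ≤ n` forces `max_{t ≤ n} |S_ν(t) - g_ν(t)| ≥
δ g_ν(n)`, whose probability Kolmogorov's maximal inequality (Doob's inequality for the
submartingale of squared partial sums) bounds by `Σ_{i<n} Var_ν(Z_{ν+i,ν}) / (δ g_ν(n))²`.
The variance condition makes this small uniformly in `ν`.
-/

open MeasureTheory ProbabilityTheory Filter Set
open scoped ENNReal NNReal

namespace QCD

/-- The sample space: sequences of real observations `X 1, X 2, ...`. -/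
abbrev Obs : Type := ℕ → ℝ

/-- Coordinate process: `X i ω = ω i`. -/
def X (i : ℕ) : Obs → ℝ := fun ω => ω i

/-- Natural filtration `F n = σ(X 1, ..., X n)`. -/
def F (n : ℕ) : MeasurableSpace Obs :=
  ⨆ i ∈ Set.Icc 1 n, MeasurableSpace.comap (X i) inferInstance

/-- A change-point model: pre-change density `p0` (everywhere positive), post-change
densities `p1 n k` (`n ≥ k ≥ 1`), measures `P ν` (change at `ν`) and `Pinf` (no change),
under which the coordinates are independent with the prescribed densities. -/
structure Model where
  p0 : ℝ → ℝ
  p1 : ℕ → ℕ → ℝ → ℝ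
  P : ℕ → Measure Obs
  Pinf : Measure Obs
  p0_pos : ∀ x, 0 < p0 x
  p0_meas : Measurable p0
  p1_meas : ∀ n k, Measurable (p1 n k)
  p1_nonneg : ∀ n k x, 0 ≤ p1 n k x
  p0_prob : ∫ x, p0 x = 1
  p1_prob : ∀ n k, 1 ≤ k → k ≤ n → ∫ x, p1 n k x = 1
  P_prob : ∀ ν, IsProbabilityMeasure (P ν)
  Pinf_prob : IsProbabilityMeasure Pinf
  P_indep : ∀ ν, iIndepFun X (P ν)
  Pinf_indep : iIndepFun X Pinf
  P_law_pre : ∀ ν i, 1 ≤ i → i < ν →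
    (P ν).map (X i) = (volume : Measure ℝ).withDensity fun x => ENNReal.ofReal (p0 x)
  P_law_post : ∀ ν i, 1 ≤ ν → ν ≤ i →
    (P ν).map (X i) = (volume : Measure ℝ).withDensity fun x => ENNReal.ofReal (p1 i ν x)
  Pinf_law : ∀ i, 1 ≤ i → Pinf.map (X i) = (volume : Measure ℝ).withDensity fun x => ENNReal.ofReal (p0 x)

/-- Log-likelihood ratio `Z_{n,k} = log (p1 n k (X n) / p0 (X n))`. -/
noncomputable def Model.Z (M : Model) (n k : ℕ) : Obs → ℝ :=
  fun ω => Real.log (M.p1 n k (ω n) / M.p0 (ω n))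

/-- Partial sum `Σ_{i=t}^{t+n-1} Z_{i,t}`. -/
noncomputable def Model.S (M : Model) (t n : ℕ) : Obs → ℝ :=
  fun ω => ∑ i ∈ Finset.range n, M.Z (t + i) t ω

/-- Expectation under `P ν`. -/
noncomputable def Model.E (M : Model) (ν : ℕ) (f : Obs → ℝ) : ℝ := ∫ ω, f ω ∂(M.P ν)

/-- `g` is the family of growth functions of the model: each `g ν` is positive, increasing and
continuous on `(0,∞)`, interpolates the cumulative KL divergence, and the one-step divergences
are positive. -/
def Model.IsGrowth (M : Model) (g : ℕ → ℝ → ℝ) : Prop :=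
  ∀ ν : ℕ, 1 ≤ ν →
    StrictMonoOn (g ν) (Set.Ioi 0) ∧ ContinuousOn (g ν) (Set.Ioi 0) ∧
    (∀ x : ℝ, 0 < x → 0 < g ν x) ∧
    (∀ n : ℕ, 1 ≤ n → g ν (n : ℝ) = ∑ i ∈ Finset.range n, M.E ν (M.Z (ν + i) ν)) ∧
    (∀ i : ℕ, ν ≤ i → 0 < M.E ν (M.Z i ν))

/-- Right-tail condition: `sup_{ν ≥ 1} P_ν(max_{t ≤ n} Σ_{i=ν}^{ν+t-1} Z_{i,ν} ≥ (1+δ) g_ν(n)) → 0`. -/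
def Model.RightTail (M : Model) (g : ℕ → ℝ → ℝ) : Prop :=
  ∀ δ : ℝ, 0 < δ →
    Tendsto (fun n : ℕ => ⨆ ν : ℕ, ⨆ _ : 1 ≤ ν,
        M.P ν {ω | ∃ t : ℕ, 1 ≤ t ∧ t ≤ n ∧ (1 + δ) * g ν (n : ℝ) ≤ M.S ν t ω})
      atTop (nhds 0)

/-- Left-tail condition: `sup_{t ≥ ν ≥ 1} P_ν(Σ_{i=t}^{t+n-1} Z_{i,t} ≤ (1-δ) g_ν(n)) → 0`. -/
def Model.LeftTail (M : Model) (g : ℕ → ℝ → ℝ) : Prop :=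
  ∀ δ : ℝ, δ ∈ Set.Ioo (0 : ℝ) 1 →
    Tendsto (fun n : ℕ => ⨆ ν : ℕ, ⨆ _ : 1 ≤ ν, ⨆ t : ℕ, ⨆ _ : ν ≤ t,
        M.P ν {ω | M.S t n ω ≤ (1 - δ) * g ν (n : ℝ)})
      atTop (nhds 0)

/-- `ginv = g⁻¹ = sup_{ν ≥ 1} g_ν⁻¹`, expressed via pointwise inverses `gi ν` of `g ν`. -/
def IsGInv (g : ℕ → ℝ → ℝ) (gi : ℕ → ℝ → ℝ) (ginv : ℝ → ℝ) : Prop :=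
  (∀ ν : ℕ, 1 ≤ ν → ∀ x : ℝ, 0 < x → 0 < gi ν x ∧ g ν (gi ν x) = x) ∧
  (∀ x : ℝ, 0 < x → IsLUB {y : ℝ | ∃ ν : ℕ, 1 ≤ ν ∧ y = gi ν x} (ginv x))

/-- A stopping time of the natural filtration, with values in `ℕ∞`. -/
def IsStopping (τ : Obs → ℕ∞) : Prop :=
  ∀ n : ℕ, MeasurableSet[F n] {ω | τ ω ≤ (n : ℕ∞)}

/-- False alarm rate `FAR(τ) = 1 / E_∞[τ]`. -/
noncomputable def Model.FAR (M : Model) (τ : Obs → ℕ∞) : ℝ≥0∞ :=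
  (∫⁻ ω, ENat.toENNReal (τ ω) ∂M.Pinf)⁻¹

/-- Pollak's measure `SADD(τ) = sup_{ν ≥ 1} E_ν[τ - ν + 1 | τ ≥ ν]`. -/
noncomputable def Model.SADD (M : Model) (τ : Obs → ℕ∞) : ℝ≥0∞ :=
  ⨆ ν : ℕ, ⨆ _ : 1 ≤ ν,
    ∫⁻ ω, ENat.toENNReal (τ ω + 1 - (ν : ℕ∞)) ∂(M.P ν)[|{ω | (ν : ℕ∞) ≤ τ ω}]

/-- The regular conditional distribution given `F (ν-1)` under `P ν`. -/
noncomputable def Model.condKer (M : Model) (ν : ℕ) : @Kernel Obs Obs (F (ν - 1)) _ :=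
  letI := M.P_prob ν
  condExpKernel (M.P ν) (F (ν - 1))

/-- Lorden's measure `WADD(τ) = sup_{ν ≥ 1} esssup E_ν[(τ - ν + 1)⁺ | F (ν-1)]`, with the
conditional expectation realized through the regular conditional distribution. -/
noncomputable def Model.WADD (M : Model) (τ : Obs → ℕ∞) : ℝ≥0∞ :=
  ⨆ ν : ℕ, ⨆ _ : 1 ≤ ν,
    essSup (fun ω =>
      ∫⁻ y, ENat.toENNReal (τ y + 1 - (ν : ℕ∞)) ∂(M.condKer ν ω)) (M.P ν)

/-- Window-limited CuSum stopping time with window size `m` and threshold `b`. -/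
noncomputable def Model.tauC (M : Model) (m : ℕ) (b : ℝ) : Obs → ℕ∞ :=
  fun ω => sInf {N : ℕ∞ | ∃ n : ℕ, N = (n : ℕ∞) ∧ 1 ≤ n ∧
    ∃ k : ℕ, max 1 (n - m) ≤ k ∧ k ≤ n ∧ b ≤ ∑ i ∈ Finset.Icc k n, M.Z i k ω}

end QCD

open Finset

section KolmogorovMaximal

variable {Ω : Type*} {mΩ : MeasurableSpace Ω} {μ : Measure Ω} {Y : ℕ → Ω → ℝ}

lemma indep_natural_comap_succ (hY : iIndepFun Y μ) (hmeas : ∀ i, StronglyMeasurable (Y i))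
    (i : ℕ) :
    Indep (Filtration.natural Y hmeas i) (MeasurableSpace.comap (Y (i + 1)) inferInstance) μ := by
  have h := indep_iSup_of_disjoint (fun k => (hmeas k).measurable.comap_le) hY
    (show Disjoint (Set.Iic i) {i + 1} by simp)
  rwa [_root_.iSup_singleton] at h

lemma setIntegral_mul_eq_zero_of_indep [IsFiniteMeasure μ] {f W : Ω → ℝ}
    (hW : AEStronglyMeasurable W μ) (hW0 : μ[W] = 0) {m : MeasurableSpace Ω}
    (hind : Indep m (MeasurableSpace.comap W inferInstance) μ) (hm : m ≤ mΩ)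
    (hf : StronglyMeasurable[m] f)
    {s : Set Ω} (hs : MeasurableSet[m] s) :
    ∫ ω in s, f ω * W ω ∂μ = 0 := by
  have hindep : IndepFun (s.indicator f) W μ :=
    indep_of_indep_of_le_left hind ((hf.indicator hs).measurable.comap_le)
  calc ∫ ω in s, f ω * W ω ∂μ = ∫ ω, s.indicator f ω * W ω ∂μ := by
        rw [← integral_indicator (hm s hs)]
        congr 1 with ω
        by_cases hω : ω ∈ s <;> simp [hω]
    _ = μ[s.indicator f] * μ[W] :=
        hindep.integral_mul_eq_mul_integral ((hf.indicator hs).mono hm).aestronglyMeasurable hW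
    _ = 0 := by rw [hW0, mul_zero]

lemma submartingale_sq_partialSum [IsFiniteMeasure μ] (hY : iIndepFun Y μ)
    (hmeas : ∀ i, StronglyMeasurable (Y i)) (hL2 : ∀ i, MemLp (Y i) 2 μ) (hmean : ∀ i, μ[Y i] = 0) :
    Submartingale (fun k ω => (∑ i ∈ range (k + 1), Y i ω) ^ 2) (Filtration.natural Y hmeas) μ := by
  set ℱ := Filtration.natural Y hmeas
  set T : ℕ → Ω → ℝ := fun k ω => ∑ i ∈ range (k + 1), Y i ω with hT
  have hTmeas : ∀ k, StronglyMeasurable[ℱ k] (T k) := fun k =>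
    stronglyMeasurable_fun_sum _ fun i hi =>
      (Filtration.stronglyAdapted_natural hmeas i).mono
        (ℱ.mono (Nat.lt_succ_iff.mp (mem_range.mp hi)))
  have hTL2 : ∀ k, MemLp (T k) 2 μ := fun k => memLp_finsetSum _ fun i _ => hL2 i
  refine submartingale_of_setIntegral_le_succ (fun k => (hTmeas k).pow 2)
    (fun k => (hTL2 k).integrable_sq) fun i s hs => ?_
  have hsucc : ∀ ω, T (i + 1) ω ^ 2 = T i ω ^ 2 + 2 * (T i ω * Y (i + 1) ω) + Y (i + 1) ω ^ 2 :=
    fun ω => by simp only [hT, sum_range_succ _ (i + 1)]; ring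
  have hsm : MeasurableSet s := ℱ.le i s hs
  have hTY : Integrable (fun ω => T i ω * Y (i + 1) ω) μ := (hTL2 i).integrable_mul (hL2 (i + 1))
  have hT2 : Integrable (fun ω => T i ω ^ 2) μ := (hTL2 i).integrable_sq
  have hY2 : Integrable (fun ω => Y (i + 1) ω ^ 2) μ := (hL2 (i + 1)).integrable_sq
  have hT2TY : Integrable (fun ω => T i ω ^ 2 + 2 * (T i ω * Y (i + 1) ω)) μ :=
    hT2.add (hTY.const_mul 2)
  have hcross : ∫ ω in s, T i ω * Y (i + 1) ω ∂μ = 0 :=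
    setIntegral_mul_eq_zero_of_indep (hL2 (i + 1)).aestronglyMeasurable (hmean (i + 1))
      (indep_natural_comap_succ hY hmeas i) (ℱ.le i) (hTmeas i) hs
  calc ∫ ω in s, T i ω ^ 2 ∂μ
      ≤ ∫ ω in s, T i ω ^ 2 ∂μ + 2 * ∫ ω in s, T i ω * Y (i + 1) ω ∂μ
          + ∫ ω in s, Y (i + 1) ω ^ 2 ∂μ := by
        rw [hcross]; linarith [setIntegral_nonneg (μ := μ) hsm fun ω _ => sq_nonneg (Y (i + 1) ω)]
    _ = ∫ ω in s, T (i + 1) ω ^ 2 ∂μ := by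
        simp_rw [hsucc]
        rw [integral_add hT2TY.integrableOn hY2.integrableOn,
          integral_add hT2.integrableOn (hTY.const_mul 2).integrableOn, integral_const_mul]

lemma integral_sq_partialSum [IsFiniteMeasure μ] (hY : iIndepFun Y μ) (hL2 : ∀ i, MemLp (Y i) 2 μ)
    (hmean : ∀ i, μ[Y i] = 0) (n : ℕ) :
    ∫ ω, (∑ i ∈ range n, Y i ω) ^ 2 ∂μ = ∑ i ∈ range n, Var[Y i; μ] := by
  rw [← IndepFun.variance_sum (fun i _ => hL2 i) fun i _ j _ hij => hY.indepFun hij,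
    variance_of_integral_eq_zero (memLp_finsetSum' _ fun i _ => hL2 i).aemeasurable]
  · simp only [Finset.sum_apply]
  · simp only [Finset.sum_apply]
    rw [integral_finsetSum _ fun i _ => (hL2 i).integrable one_le_two]
    simp [hmean]

theorem kolmogorov_maximal_ineq [IsProbabilityMeasure μ] (hY : iIndepFun Y μ)
    (hmeas : ∀ i, StronglyMeasurable (Y i)) (hL2 : ∀ i, MemLp (Y i) 2 μ) (hmean : ∀ i, μ[Y i] = 0)
    {ε : ℝ} (hε : 0 < ε) (n : ℕ) :
    μ {ω | ∃ k ≤ n, ε ≤ |∑ i ∈ range (k + 1), Y i ω|}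
      ≤ ENNReal.ofReal ((∑ i ∈ range (n + 1), Var[Y i; μ]) / ε ^ 2) := by
  set Q : ℕ → Ω → ℝ := fun k ω => (∑ i ∈ range (k + 1), Y i ω) ^ 2
  set ε₀ : ℝ≥0 := (ε ^ 2).toNNReal
  have hε₀ : (ε₀ : ℝ) = ε ^ 2 := Real.coe_toNNReal _ (by positivity)
  set E := {ω | (ε₀ : ℝ) ≤ (range (n + 1)).sup' nonempty_range_add_one fun k => Q k ω}
  have hsub : {ω | ∃ k ≤ n, ε ≤ |∑ i ∈ range (k + 1), Y i ω|} ⊆ E := by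
    rintro ω ⟨k, hkn, hk⟩
    rw [Set.mem_ofPred_eq, hε₀]
    refine le_trans (show ε ^ 2 ≤ Q k ω from ?_)
      (le_sup' (fun k => Q k ω) (mem_range.2 (Nat.lt_succ_of_le hkn)))
    simpa only [Q, sq_abs] using pow_le_pow_left₀ hε.le hk 2
  have hdoob : ENNReal.ofReal (ε ^ 2) * μ E
      ≤ ENNReal.ofReal (∑ i ∈ range (n + 1), Var[Y i; μ]) := by
    refine (maximal_ineq (submartingale_sq_partialSum hY hmeas hL2 hmean)
      (fun k ω => sq_nonneg _) n).trans (ENNReal.ofReal_le_ofReal ?_)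
    rw [← integral_sq_partialSum hY hL2 hmean]
    exact setIntegral_le_integral (memLp_finsetSum _ fun i _ => hL2 i).integrable_sq
      (Eventually.of_forall fun ω => sq_nonneg _)
  have hε2 : 0 < ε ^ 2 := by positivity
  rw [ENNReal.ofReal_div_of_pos hε2, ENNReal.le_div_iff_mul_le
    (Or.inl (ENNReal.ofReal_pos.2 hε2).ne') (Or.inl ENNReal.ofReal_ne_top), mul_comm]
  calc ENNReal.ofReal (ε ^ 2) * μ {ω | ∃ k ≤ n, ε ≤ |∑ i ∈ range (k + 1), Y i ω|}
      ≤ ENNReal.ofReal (ε ^ 2) * μ E := by gcongr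
    _ ≤ _ := hdoob

end KolmogorovMaximal

namespace QCD

namespace Model

variable (M : Model)

lemma measurable_llr (i k : ℕ) : Measurable fun x => Real.log (M.p1 i k x / M.p0 x) :=
  Real.measurable_log.comp ((M.p1_meas i k).div M.p0_meas)

lemma measurable_Z (i k : ℕ) : Measurable (M.Z i k) :=
  (M.measurable_llr i k).comp (measurable_pi_apply i)

lemma iIndepFun_Z_sub_const (ν : ℕ) (c : ℕ → ℝ) :
    iIndepFun (fun i ω => M.Z (ν + i) ν ω - c i) (M.P ν) :=
  ((M.P_indep ν).precomp (add_right_injective ν)).comp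
    (fun i x => Real.log (M.p1 (ν + i) ν x / M.p0 x) - c i)
    fun _ => (M.measurable_llr _ _).sub_const _

lemma measure_exists_partialSum_ge_le {g : ℕ → ℝ → ℝ} (hg : M.IsGrowth g) {ν n : ℕ}
    (hν : 1 ≤ ν) (hn : 1 ≤ n) (hL2 : ∀ i, MemLp (M.Z (ν + i) ν) 2 (M.P ν)) {δ : ℝ} (hδ : 0 < δ) :
    M.P ν {ω | ∃ t : ℕ, 1 ≤ t ∧ t ≤ n ∧ (1 + δ) * g ν n ≤ M.S ν t ω}
      ≤ ENNReal.ofReal ((∑ i ∈ range n, Var[M.Z (ν + i) ν; M.P ν]) / (δ * g ν n) ^ 2) := by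
  have := M.P_prob ν
  obtain ⟨hmono, -, hpos, hsum, -⟩ := hg ν hν
  set W : ℕ → Obs → ℝ := fun i ω => M.Z (ν + i) ν ω - M.E ν (M.Z (ν + i) ν)
  have hWL2 : ∀ i, MemLp (W i) 2 (M.P ν) := fun i => (hL2 i).sub (memLp_const _)
  have hWmean : ∀ i, (M.P ν)[W i] = 0 := fun i => by
    simp [W, integral_sub ((hL2 i).integrable one_le_two) (integrable_const _), Model.E]
  have hkol := kolmogorov_maximal_ineq (M.iIndepFun_Z_sub_const ν _)
    (fun i => ((M.measurable_Z _ _).sub_const _).stronglyMeasurable) hWL2 hWmean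
    (mul_pos hδ (hpos n (by exact_mod_cast hn))) (n - 1)
  rw [Nat.sub_add_cancel hn] at hkol
  simp only [fun i => variance_sub_const (hL2 i).aestronglyMeasurable] at hkol
  refine (measure_mono ?_).trans hkol
  rintro ω ⟨t, ht1, htn, hSt⟩
  refine ⟨t - 1, by omega, ?_⟩
  have hWsum : ∑ i ∈ range (t - 1 + 1), W i ω = M.S ν t ω - g ν t := by
    rw [Nat.sub_add_cancel ht1, Finset.sum_sub_distrib, hsum t ht1]; rfl
  have hgt : g ν t ≤ g ν n := hmono.monotoneOn (Set.mem_Ioi.2 (by exact_mod_cast ht1))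
    (Set.mem_Ioi.2 (by exact_mod_cast hn)) (by exact_mod_cast htn)
  rw [hWsum]
  exact le_abs.2 (Or.inl (by linarith))

end Model

/-- **Lemma 1, first part.** If the log-likelihood ratios have finite second
moments and `sup_{t ≥ ν ≥ 1} g_ν(n)⁻² Σ_{i=t}^{t+n-1} Var_ν(Z_{i,t}) → 0`, then the
right-tail condition holds. -/
theorem rightTail_of_variance_condition
    (M : Model) (g : ℕ → ℝ → ℝ) (hg : M.IsGrowth g)
    (hL2 : ∀ ν t i : ℕ, 1 ≤ ν → ν ≤ t → t ≤ i → MemLp (M.Z i t) 2 (M.P ν))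
    (hvar : ∀ ε : ℝ, 0 < ε → ∃ N : ℕ, ∀ n : ℕ, N ≤ n → ∀ ν t : ℕ, 1 ≤ ν → ν ≤ t →
      ∑ i ∈ Finset.range n, variance (M.Z (t + i) t) (M.P ν) ≤ ε * g ν (n : ℝ) ^ 2) :
    M.RightTail g := by
  intro δ hδ
  rw [ENNReal.tendsto_atTop_zero]
  intro ε hε
  obtain ⟨r, -, hr, hrε⟩ := ENNReal.lt_iff_exists_real_btwn.1 hε
  obtain ⟨N, hN⟩ := hvar (δ ^ 2 * r) (by have := ENNReal.ofReal_pos.1 hr; positivity)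
  refine ⟨max N 1, fun n hn => iSup₂_le fun ν hν => ?_⟩
  have hn1 : 1 ≤ n := le_of_max_le_right hn
  have hgn : 0 < g ν n := (hg ν hν).2.2.1 n (by exact_mod_cast hn1)
  calc _ ≤ ENNReal.ofReal ((∑ i ∈ range n, Var[M.Z (ν + i) ν; M.P ν]) / (δ * g ν n) ^ 2) :=
        M.measure_exists_partialSum_ge_le hg hν hn1
          (fun i => hL2 ν ν (ν + i) hν le_rfl (Nat.le_add_right ν i)) hδ
    _ ≤ ENNReal.ofReal r := ENNReal.ofReal_le_ofReal <| by
        rw [div_le_iff₀ (by positivity)]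
        linarith [hN n (le_of_max_le_left hn) ν ν hν le_rfl]
    _ ≤ ε := hrε.le

end QCD
end

section
/- In the change-point model, for every stopping time τ of (F_n), every integer ν ≥ 1, every integer h ≥ 1 and every real C > 0: P_ν( ν ≤ τ < ν + h ) ≤ e^C · P_∞( ν ≤ τ < ν + h ) + P_ν( max_{0 ≤ n < h} Σ_{i=ν}^{ν+n} Z_{i,ν} ≥ C ). -/
open MeasureTheory ProbabilityTheory Filter Set
open scoped ENNReal NNReal

namespace QCD

/-!
On `F n` the measure `P ν` has density `∏_{i=ν}^{n} p_{1,i,ν}(X i) / p0(X i)` with respect to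
`P_∞`: by independence both sides factor over the coordinates of a cylinder set, and cylinder sets
generate `F n`. This density is at most `exp (Σ_{i=ν}^{n} Z_{i,ν})`. Splitting `{τ = n}` according
to whether this partial sum stays below `C`, the part where it does has `P ν`-mass at most
`e^C P_∞(τ = n)`, and the other part lies in the event of the last term.
-/

lemma measurable_X (i : ℕ) : Measurable (X i) := measurable_pi_apply i

lemma F_le (n : ℕ) : F n ≤ (inferInstance : MeasurableSpace Obs) :=
  iSup₂_le fun i _ => (measurable_X i).comap_le

lemma F_mono {m n : ℕ} (h : m ≤ n) : F m ≤ F n :=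
  iSup₂_le fun i hi => le_iSup₂ (f := fun i _ => MeasurableSpace.comap (X i) inferInstance) i
    ⟨hi.1, hi.2.trans h⟩

lemma measurable_F_X {i n : ℕ} (h1 : 1 ≤ i) (h2 : i ≤ n) : Measurable[F n] (X i) :=
  measurable_iff_comap_le.mpr
    (le_iSup₂ (f := fun i _ => MeasurableSpace.comap (X i) inferInstance) i ⟨h1, h2⟩)

lemma IsStopping.measurableSet_eq {τ : Obs → ℕ∞} (hτ : IsStopping τ) (n : ℕ) :
    MeasurableSet[F n] {ω | τ ω = n} := by
  cases n with
  | zero => simpa only [Nat.cast_zero, nonpos_iff_eq_zero] using hτ 0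
  | succ k =>
    have hsplit : {ω | τ ω = ↑(k + 1)} = {ω | τ ω ≤ ↑(k + 1)} \ {ω | τ ω ≤ k} := by
      ext ω
      simp only [Set.mem_sdiff, Set.mem_ofPred_eq]
      induction τ ω using ENat.recTopCoe with
      | top => exact iff_of_false (ENat.top_ne_natCast _) fun h =>
          ENat.top_ne_natCast _ (top_le_iff.mp h.1).symm
      | coe a => norm_cast; omega
    rw [hsplit]
    exact (hτ (k + 1)).diff (F_mono k.le_succ _ (hτ k))

lemma IsStopping.measure_eq_sum {τ : Obs → ℕ∞} (hτ : IsStopping τ) (μ : Measure Obs) (ν h : ℕ) :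
    μ {ω | ∃ n : ℕ, τ ω = n ∧ ν ≤ n ∧ n < ν + h}
      = ∑ n ∈ Finset.Ico ν (ν + h), μ {ω | τ ω = n} := by
  have hunion : {ω | ∃ n : ℕ, τ ω = n ∧ ν ≤ n ∧ n < ν + h}
      = ⋃ n ∈ Finset.Ico ν (ν + h), {ω | τ ω = n} := by
    ext ω
    simp [and_comm]
  have hdisj : Set.PairwiseDisjoint ↑(Finset.Ico ν (ν + h)) fun n : ℕ => {ω | τ ω = n} :=
    fun m _ n _ hmn => Set.disjoint_left.mpr fun ω (hm : τ ω = m) (hn : τ ω = n) =>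
      hmn (by exact_mod_cast hm.symm.trans hn)
  rw [hunion, measure_biUnion_finset hdisj fun n _ => F_le n _ (hτ.measurableSet_eq n)]

lemma measure_eq_of_forall_cylinder {μ μ' : Measure Obs} [IsFiniteMeasure μ] (n : ℕ)
    (h : ∀ B : ℕ → Set ℝ, (∀ i, MeasurableSet (B i)) →
      μ (⋂ i ∈ Finset.Icc 1 n, X i ⁻¹' B i) = μ' (⋂ i ∈ Finset.Icc 1 n, X i ⁻¹' B i))
    {D : Set Obs} (hD : MeasurableSet[F n] D) : μ D = μ' D := by
  refine ext_on_measurableSpace_of_generate_finite _ _ ?_ (F_le n)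
    (generateFrom_piiUnionInter_measurableSet _ _).symm
    (isPiSystem_piiUnionInter _
      (fun i => @MeasurableSpace.isPiSystem_measurableSet _ (.comap (X i) inferInstance)) _) ?_ hD
  · rintro _ ⟨t, ht, f, hf, rfl⟩
    choose! B hB hfB using fun i hi => MeasurableSpace.measurableSet_comap.mp (hf i hi)
    have hcyl : ⋂ i ∈ t, f i
        = ⋂ i ∈ Finset.Icc 1 n, X i ⁻¹' (if i ∈ t then B i else Set.univ) := by
      ext ω
      simp only [Set.mem_iInter]
      refine ⟨fun hω i _ => ?_, fun hω i hi => ?_⟩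
      · split_ifs with hi
        · exact (hfB i hi).symm ▸ hω i hi
        · trivial
      · simpa [hi, ← hfB i hi] using hω i (by simpa using ht hi)
    rw [hcyl]
    exact h _ fun i => by split_ifs with hi; exacts [hB i hi, .univ]
  · simpa using h (fun _ => Set.univ) fun _ => .univ

namespace Model

variable (M : Model)

noncomputable def lr (ν i : ℕ) (x : ℝ) : ℝ≥0∞ :=
  if ν ≤ i then ENNReal.ofReal (M.p1 i ν x / M.p0 x) else 1

noncomputable def lrProd (ν n : ℕ) (ω : Obs) : ℝ≥0∞ :=
  ∏ i ∈ Finset.Icc 1 n, M.lr ν i (ω i)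

lemma measurable_lr (ν i : ℕ) : Measurable (M.lr ν i) := by
  unfold lr
  split_ifs
  · exact ((M.p1_meas i ν).div M.p0_meas).ennreal_ofReal
  · exact measurable_const

lemma measurable_F_Z {i n : ℕ} (k : ℕ) (h1 : 1 ≤ i) (h2 : i ≤ n) : Measurable[F n] (M.Z i k) :=
  (Real.measurable_log.comp ((M.p1_meas i k).div M.p0_meas)).comp (measurable_F_X h1 h2)

lemma measurable_F_S {t : ℕ} (ht : 1 ≤ t) (n : ℕ) : Measurable[F n] (M.S t (n + 1 - t)) :=
  Finset.measurable_sum _ fun i hi =>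
    M.measurable_F_Z t (by omega) (by have := Finset.mem_range.mp hi; omega)

lemma map_P_eq_withDensity_lr {ν i : ℕ} (hν : 1 ≤ ν) (hi : 1 ≤ i) :
    (M.P ν).map (X i) = (M.Pinf.map (X i)).withDensity (M.lr ν i) := by
  rw [M.Pinf_law i hi, ← withDensity_mul _ M.p0_meas.ennreal_ofReal (M.measurable_lr ν i)]
  by_cases hνi : ν ≤ i
  · rw [M.P_law_post ν i hν hνi]
    congr 1
    ext x
    rw [Pi.mul_apply, lr, if_pos hνi, ← ENNReal.ofReal_mul (M.p0_pos x).le,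
      mul_div_cancel₀ _ (M.p0_pos x).ne']
  · simp only [M.P_law_pre ν i hi (not_le.mp hνi), lr, if_neg hνi, Pi.mul_def, mul_one]

lemma lintegral_indicator_lr {ν i : ℕ} (hν : 1 ≤ ν) (hi : 1 ≤ i) {B : Set ℝ}
    (hB : MeasurableSet B) :
    ∫⁻ ω, B.indicator (M.lr ν i) (ω i) ∂M.Pinf = M.P ν (X i ⁻¹' B) := by
  rw [← Measure.map_apply (measurable_X i) hB, M.map_P_eq_withDensity_lr hν hi,
    withDensity_apply _ hB, ← lintegral_indicator hB,
    lintegral_map ((M.measurable_lr ν i).indicator hB) (measurable_X i)]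
  rfl

lemma P_cylinder_eq {ν : ℕ} (hν : 1 ≤ ν) (n : ℕ) {B : ℕ → Set ℝ}
    (hB : ∀ i, MeasurableSet (B i)) :
    M.P ν (⋂ i ∈ Finset.Icc 1 n, X i ⁻¹' B i)
      = M.Pinf.withDensity (M.lrProd ν n) (⋂ i ∈ Finset.Icc 1 n, X i ⁻¹' B i) := by
  have hmeas : ∀ i, Measurable ((B i).indicator (M.lr ν i)) :=
    fun i => (M.measurable_lr ν i).indicator (hB i)
  have hind : iIndepFun (fun i ω => (B i).indicator (M.lr ν i) (ω i)) M.Pinf :=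
    M.Pinf_indep.comp _ hmeas
  have hprod : ∀ ω, ∏ i ∈ Finset.Icc 1 n, (B i).indicator (M.lr ν i) (ω i)
      = (⋂ i ∈ Finset.Icc 1 n, X i ⁻¹' B i).indicator (M.lrProd ν n) ω := fun ω => by
    have hfn : M.lrProd ν n = ∏ i ∈ Finset.Icc 1 n, fun ω : Obs => M.lr ν i (ω i) :=
      (Finset.prod_fn _ _).symm
    rw [hfn, ← prod_indicator_apply]
    exact Finset.prod_congr rfl fun i _ => (Set.indicator_comp_right (X i)).symm
  rw [(M.P_indep ν).measure_inter_preimage_eq_mul _ fun i _ => hB i,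
    withDensity_apply _ (Finset.measurableSet_biInter _ fun i _ => measurable_X i (hB i)),
    ← lintegral_indicator (Finset.measurableSet_biInter _ fun i _ => measurable_X i (hB i)),
    ← lintegral_congr hprod,
    lintegral_prod_eq_prod_lintegral_of_indepFun _ _ hind
      fun i => (hmeas i).comp (measurable_X i)]
  exact Finset.prod_congr rfl fun i hi =>
    (M.lintegral_indicator_lr hν (Finset.mem_Icc.mp hi).1 (hB i)).symm

lemma P_eq_withDensity_lrProd {ν n : ℕ} (hν : 1 ≤ ν) {D : Set Obs} (hD : MeasurableSet[F n] D) :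
    M.P ν D = M.Pinf.withDensity (M.lrProd ν n) D :=
  haveI := M.P_prob ν
  measure_eq_of_forall_cylinder n (fun _ hB => M.P_cylinder_eq hν n hB) hD

lemma lrProd_le_exp_S {ν : ℕ} (hν : 1 ≤ ν) (n : ℕ) (ω : Obs) :
    M.lrProd ν n ω ≤ ENNReal.ofReal (Real.exp (M.S ν (n + 1 - ν) ω)) := by
  have hsupport : (Finset.Icc 1 n).filter (ν ≤ ·) = Finset.Ico ν (n + 1) := by
    ext i
    simp only [Finset.mem_filter, Finset.mem_Icc, Finset.mem_Ico]
    omega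
  have hratio : ∀ i, ENNReal.ofReal (M.p1 i ν (ω i) / M.p0 (ω i))
      ≤ ENNReal.ofReal (Real.exp (M.Z i ν ω)) :=
    fun i => ENNReal.ofReal_le_ofReal (Real.le_exp_log _)
  calc M.lrProd ν n ω
      = ∏ k ∈ Finset.range (n + 1 - ν),
          ENNReal.ofReal (M.p1 (ν + k) ν (ω (ν + k)) / M.p0 (ω (ν + k))) := by
        simp only [lrProd, lr]
        rw [← Finset.prod_filter, hsupport, Finset.prod_Ico_eq_prod_range]
    _ ≤ ∏ k ∈ Finset.range (n + 1 - ν), ENNReal.ofReal (Real.exp (M.Z (ν + k) ν ω)) :=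
        Finset.prod_le_prod' fun k _ => hratio (ν + k)
    _ = ENNReal.ofReal (Real.exp (M.S ν (n + 1 - ν) ω)) := by
        rw [S, Real.exp_sum, ENNReal.ofReal_prod_of_nonneg fun k _ => (Real.exp_pos _).le]

lemma P_le_exp_mul_Pinf {ν n : ℕ} (hν : 1 ≤ ν) {D : Set Obs} (hD : MeasurableSet[F n] D)
    {C : ℝ} (hS : ∀ ω ∈ D, M.S ν (n + 1 - ν) ω ≤ C) :
    M.P ν D ≤ ENNReal.ofReal (Real.exp C) * M.Pinf D := by
  rw [M.P_eq_withDensity_lrProd hν hD, withDensity_apply _ (F_le n _ hD),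
    ← setLIntegral_const]
  exact setLIntegral_mono' (F_le n _ hD) fun ω hω =>
    (M.lrProd_le_exp_S hν n ω).trans (ENNReal.ofReal_le_ofReal (Real.exp_le_exp.mpr (hS ω hω)))

end Model

theorem change_of_measure_delay_probability_bound_general
    (M : Model) (τ : Obs → ℕ∞) (hτ : IsStopping τ)
    (ν : ℕ) (hν : 1 ≤ ν) (h : ℕ) (C : ℝ) :
    M.P ν {ω | ∃ n : ℕ, τ ω = (n : ℕ∞) ∧ ν ≤ n ∧ n < ν + h}
      ≤ ENNReal.ofReal (Real.exp C)
          * M.Pinf {ω | ∃ n : ℕ, τ ω = (n : ℕ∞) ∧ ν ≤ n ∧ n < ν + h}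
        + M.P ν {ω | ∃ n : ℕ, n < h ∧ C ≤ ∑ i ∈ Finset.range (n + 1), M.Z (ν + i) ν ω} := by
  set A := {ω | ∃ n : ℕ, τ ω = (n : ℕ∞) ∧ ν ≤ n ∧ n < ν + h}
  set B := {ω | ∃ n : ℕ, n < h ∧ C ≤ ∑ i ∈ Finset.range (n + 1), M.Z (ν + i) ν ω}
  set T : ℕ → Set Obs := fun n => {ω | τ ω = n}
  set E : ℕ → Set Obs := fun n => {ω | M.S ν (n + 1 - ν) ω < C}
  have hcover : A ⊆ (⋃ n ∈ Finset.Ico ν (ν + h), T n ∩ E n) ∪ B := by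
    rintro ω ⟨n, hτn, hνn, hnh⟩
    by_cases hE : ω ∈ E n
    · exact .inl (Set.mem_iUnion₂.mpr ⟨n, Finset.mem_Ico.mpr ⟨hνn, hnh⟩, hτn, hE⟩)
    · refine .inr ⟨n - ν, by omega, ?_⟩
      rw [show n - ν + 1 = n + 1 - ν by omega]
      exact not_lt.mp hE
  have hTE : ∀ n, MeasurableSet[F n] (T n ∩ E n) := fun n =>
    (hτ.measurableSet_eq n).inter (measurableSet_lt (M.measurable_F_S hν n) measurable_const)
  calc M.P ν A
      ≤ ∑ n ∈ Finset.Ico ν (ν + h), M.P ν (T n ∩ E n) + M.P ν B :=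
        (measure_mono hcover).trans
          ((measure_union_le _ _).trans (add_le_add_left (measure_biUnion_finset_le _ _) _))
    _ ≤ ∑ n ∈ Finset.Ico ν (ν + h), ENNReal.ofReal (Real.exp C) * M.Pinf (T n) + M.P ν B := by
        gcongr with n
        exact (M.P_le_exp_mul_Pinf hν (hTE n) fun ω hω => hω.2.le).trans
          (by gcongr; exact Set.inter_subset_left)
    _ = ENNReal.ofReal (Real.exp C) * M.Pinf A + M.P ν B := by
        rw [hτ.measure_eq_sum, Finset.mul_sum]

/-- **change-of-measure inequality.** For every stopping time `τ`, change
point `ν ≥ 1`, horizon `h ≥ 1` and `C > 0`,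
`P_ν(ν ≤ τ < ν + h) ≤ e^C P_∞(ν ≤ τ < ν + h) + P_ν(max_{0 ≤ n < h} Σ_{i=ν}^{ν+n} Z_{i,ν} ≥ C)`. -/
theorem change_of_measure_delay_probability_bound
    (M : Model) (τ : Obs → ℕ∞) (hτ : IsStopping τ)
    (ν : ℕ) (hν : 1 ≤ ν) (h : ℕ) (hh : 1 ≤ h) (C : ℝ) (hC : 0 < C) :
    M.P ν {ω | ∃ n : ℕ, τ ω = (n : ℕ∞) ∧ ν ≤ n ∧ n < ν + h}
      ≤ ENNReal.ofReal (Real.exp C)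
          * M.Pinf {ω | ∃ n : ℕ, τ ω = (n : ℕ∞) ∧ ν ≤ n ∧ n < ν + h}
        + M.P ν {ω | ∃ n : ℕ, n < h ∧ C ≤ ∑ i ∈ Finset.range (n + 1), M.Z (ν + i) ν ω} :=
  change_of_measure_delay_probability_bound_general M τ hτ ν hν h C

end QCD
end
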